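/- arXiv:2312.00137 — 3 statements merged into one kernel-verified Lean document; each statement's English description precedes it below -/
import Mathlib

section
/- Let Y ∈ ℂ^{d×M}, U ∈ ℂ^{d×r}, V ∈ ℂ^{M×r}, and let Σ ∈ ℂ^{r×r} be invertible. Define K_DMD = YVΣ⁻¹U* ∈ ℂ^{d×d} and the projected matrix K̃ = U*YVΣ⁻¹ ∈ ℂ^{r×r}. Suppose w ∈ ℂʳ is nonzero and λ ∈ ℂ satisfies K̃w = λw. Then the exact DMD mode Φ = YVΣ⁻¹w satisfies K_DMD Φ = λΦ; moreover, if λ ≠ 0 then Φ ≠ 0, so Φ is an eigenvector of K_DMD with eigenvalue λ. Hence exact DMD computes exact eigenvalues and eigenvectors of K_DMD. -/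
open scoped Matrix

/-- Exact DMD computes exact eigenpairs: if `K̃ = U*YVΣ⁻¹` satisfies `K̃w = λw`
with `w ≠ 0`, then the exact mode `Φ = YVΣ⁻¹w` satisfies `K_DMD Φ = λΦ` for
`K_DMD = YVΣ⁻¹U*`; moreover, if `λ ≠ 0` then `Φ ≠ 0`, so `Φ` is an eigenvector
of `K_DMD` with eigenvalue `λ`. -/
theorem exact_dmd_modes_are_eigenvectors
    {d M r : ℕ}
    (Y : Matrix (Fin d) (Fin M) ℂ)
    (U : Matrix (Fin d) (Fin r) ℂ) (V : Matrix (Fin M) (Fin r) ℂ)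
    (S : Matrix (Fin r) (Fin r) ℂ) (hS : IsUnit S)
    (KDMD : Matrix (Fin d) (Fin d) ℂ) (hKDMD : KDMD = Y * V * S⁻¹ * Uᴴ)
    (Ktil : Matrix (Fin r) (Fin r) ℂ) (hKtil : Ktil = Uᴴ * Y * V * S⁻¹)
    (w : Fin r → ℂ) (hw : w ≠ 0) (lam : ℂ) (heig : Ktil.mulVec w = lam • w)
    (Φ : Fin d → ℂ) (hΦ : Φ = (Y * V * S⁻¹).mulVec w) :
    KDMD.mulVec Φ = lam • Φ ∧ (lam ≠ 0 → Φ ≠ 0) := by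
  have key : KDMD.mulVec Φ = lam • Φ := by
    subst hKDMD hKtil hΦ
    rw [Matrix.mulVec_mulVec]
    have : Y * V * S⁻¹ * Uᴴ * (Y * V * S⁻¹) = (Y * V * S⁻¹) * (Uᴴ * Y * V * S⁻¹) := by
      simp only [Matrix.mul_assoc]
    rw [this, ← Matrix.mulVec_mulVec, heig, Matrix.mulVec_smul]
  refine ⟨key, fun hlam hΦ0 => ?_⟩
  have h1 : Ktil.mulVec w = Uᴴ.mulVec Φ := by
    subst hKtil hΦ; rw [Matrix.mulVec_mulVec]
    congr 1; simp only [Matrix.mul_assoc]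
  rw [hΦ0, Matrix.mulVec_zero, heig] at h1
  exact hw (by simpa [smul_eq_zero, hlam] using h1)
end

section
/- Let H be a complex Hilbert space with inner product ⟨·,·⟩ linear in its first argument, let ψ₁, …, ψ_N, φ₁, …, φ_N ∈ H, and let g ∈ ℂ^N be such that Σ_j g_jψ_j ≠ 0. Suppose G⁽ᴹ⁾, A⁽ᴹ⁾, L⁽ᴹ⁾ ∈ ℂ^{N×N} are sequences of matrices (indexed by M) such that lim_{M→∞} G⁽ᴹ⁾_{jk} = ⟨ψ_k, ψ_j⟩, lim_{M→∞} A⁽ᴹ⁾_{jk} = ⟨φ_k, ψ_j⟩ and lim_{M→∞} L⁽ᴹ⁾_{jk} = ⟨φ_k, φ_j⟩ for all 1 ≤ j, k ≤ N. Then for every λ ∈ ℂ, lim_{M→∞} [g*(L⁽ᴹ⁾ − λ(A⁽ᴹ⁾)* − conj(λ)A⁽ᴹ⁾ + |λ|²G⁽ᴹ⁾)g] / (g*G⁽ᴹ⁾g) = ‖Σ_j g_jφ_j − λΣ_j g_jψ_j‖² / ‖Σ_j g_jψ_j‖². In particular, taking φ_j = Kψ_j for the Koopman operator K, the ResDMD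 residual computed from quadrature data converges, as the data size M → ∞, to the exact infinite-dimensional relative residual ‖(K − λI)g‖²/‖g‖² of the observable g = Σ_j g_jψ_j. -/
open scoped Matrix
open Filter

/-!
Entrywise convergence of `G⁽ᴹ⁾`, `A⁽ᴹ⁾`, `L⁽ᴹ⁾` makes the residual matrix
`L - λ Aᴴ - conj λ A + |λ|² G` converge to the Gram matrix of the family `φ_j - λ ψ_j`, whose
quadratic form at `g` is `‖Σ_j g_j φ_j - λ Σ_j g_j ψ_j‖²`; likewise the quadratic form of `G⁽ᴹ⁾`
converges to `‖Σ_j g_j ψ_j‖² ≠ 0`, and the quotient passes to the limit.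
-/

namespace Matrix

section Topology

variable {α R m n : Type*} [TopologicalSpace R]

lemma tendsto_of_tendsto_apply {l : Filter α} {X : α → Matrix m n R} {Y : Matrix m n R}
    (h : ∀ i j, Tendsto (fun a => X a i j) l (nhds (Y i j))) : Tendsto X l (nhds Y) :=
  tendsto_pi_nhds.2 fun i => tendsto_pi_nhds.2 (h i)

lemma tendsto_conjTranspose [Star R] [ContinuousStar R] {l : Filter α} {X : α → Matrix m n R}
    {Y : Matrix m n R} (h : Tendsto X l (nhds Y)) : Tendsto (fun a => (X a)ᴴ) l (nhds Yᴴ) :=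
  (continuous_id.matrix_conjTranspose.tendsto Y).comp h

lemma tendsto_star_dotProduct_mulVec [Fintype n] [Star R] [NonUnitalNonAssocSemiring R]
    [IsTopologicalSemiring R] {l : Filter α} {X : α → Matrix n n R} {Y : Matrix n n R}
    (h : Tendsto X l (nhds Y)) (x : n → R) :
    Tendsto (fun a => star x ⬝ᵥ X a *ᵥ x) l (nhds (star x ⬝ᵥ Y *ᵥ x)) :=
  ((continuous_const.dotProduct (continuous_id.matrix_mulVec continuous_const)).tendsto Y).comp h

end Topology

section Gram

variable {𝕜 E n : Type*} [RCLike 𝕜] [NormedAddCommGroup E] [InnerProductSpace 𝕜 E]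

variable (𝕜) in
def crossGram (v w : n → E) : Matrix n n 𝕜 := of fun i j => inner 𝕜 (v i) (w j)

@[simp]
lemma crossGram_apply (v w : n → E) (i j : n) :
    crossGram 𝕜 v w i j = inner 𝕜 (v i) (w j) := rfl

lemma conjTranspose_crossGram (v w : n → E) : (crossGram 𝕜 v w)ᴴ = crossGram 𝕜 w v :=
  ext fun _ _ => inner_conj_symm _ _

lemma gram_sub_smul (v w : n → E) (c : 𝕜) :
    gram 𝕜 (v - c • w) = gram 𝕜 v - c • crossGram 𝕜 v w - (starRingEnd 𝕜 c) • crossGram 𝕜 w v +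
      ((‖c‖ ^ 2 : ℝ) : 𝕜) • gram 𝕜 w := by
  ext i j
  simp only [gram_apply, crossGram_apply, Pi.sub_apply, Pi.smul_apply, sub_apply, add_apply,
    smul_apply, smul_eq_mul, inner_sub_left, inner_sub_right, inner_smul_left, inner_smul_right,
    RCLike.ofReal_pow, ← RCLike.mul_conj]
  ring

lemma star_dotProduct_gram_mulVec_self [Fintype n] (v : n → E) (x : n → 𝕜) :
    star x ⬝ᵥ gram 𝕜 v *ᵥ x = ((‖∑ i, x i • v i‖ ^ 2 : ℝ) : 𝕜) := by
  rw [star_dotProduct_gram_mulVec, inner_self_eq_norm_sq_to_K, RCLike.ofReal_pow]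

end Gram

end Matrix

open Matrix in
/-- Convergence of the ResDMD residual in the large-data limit: if the matrices
`G⁽ᴹ⁾`, `A⁽ᴹ⁾`, `L⁽ᴹ⁾` converge entrywise to the Gram matrices `⟨ψ_k, ψ_j⟩`,
`⟨φ_k, ψ_j⟩`, `⟨φ_k, φ_j⟩` (inner product linear in its first argument, so in
Mathlib's convention `⟪ψ_j, ψ_k⟫` etc.), then for every `λ ∈ ℂ` the computed
residual quotient converges to the exact relative residual
`‖Σ_j g_jφ_j − λΣ_j g_jψ_j‖² / ‖Σ_j g_jψ_j‖²`. -/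
theorem resdmd_residual_large_data_limit
    {H : Type*} [NormedAddCommGroup H] [InnerProductSpace ℂ H]
    {N : ℕ} (ψ φ : Fin N → H)
    (g : Fin N → ℂ) (hg : ∑ j, g j • ψ j ≠ 0)
    (G A L : ℕ → Matrix (Fin N) (Fin N) ℂ)
    (hG : ∀ j k, Tendsto (fun M => G M j k) atTop (nhds (inner ℂ (ψ j) (ψ k) : ℂ)))
    (hA : ∀ j k, Tendsto (fun M => A M j k) atTop (nhds (inner ℂ (ψ j) (φ k) : ℂ)))
    (hL : ∀ j k, Tendsto (fun M => L M j k) atTop (nhds (inner ℂ (φ j) (φ k) : ℂ))) :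
    ∀ lam : ℂ,
      Tendsto (fun M =>
          dotProduct (star g)
              ((L M - lam • (A M)ᴴ - (starRingEnd ℂ lam) • A M +
                ((‖lam‖ ^ 2 : ℝ) : ℂ) • G M).mulVec g) /
            dotProduct (star g) ((G M).mulVec g))
        atTop
        (nhds (((‖(∑ j, g j • φ j) - lam • ∑ j, g j • ψ j‖ ^ 2 /
          ‖∑ j, g j • ψ j‖ ^ 2 : ℝ)) : ℂ)) := by
  intro lam
  have hG' : Tendsto G atTop (nhds (gram ℂ ψ)) := tendsto_of_tendsto_apply hG
  have hA' : Tendsto A atTop (nhds (crossGram ℂ ψ φ)) := tendsto_of_tendsto_apply hA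
  have hL' : Tendsto L atTop (nhds (gram ℂ φ)) := tendsto_of_tendsto_apply hL
  have hres : Tendsto (fun M => L M - lam • (A M)ᴴ - (starRingEnd ℂ lam) • A M +
      ((‖lam‖ ^ 2 : ℝ) : ℂ) • G M) atTop (nhds (gram ℂ (φ - lam • ψ))) := by
    rw [gram_sub_smul, ← conjTranspose_crossGram]
    exact ((hL'.sub ((tendsto_conjTranspose hA').const_smul lam)).sub (hA'.const_smul _)).add
      (hG'.const_smul _)
  have hden_ne : ((‖∑ j, g j • ψ j‖ ^ 2 : ℝ) : ℂ) ≠ 0 := by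
    exact_mod_cast pow_ne_zero 2 (norm_ne_zero_iff.2 hg)
  have hlim := (tendsto_star_dotProduct_mulVec hres g).div
    (tendsto_star_dotProduct_mulVec hG' g) (by rwa [star_dotProduct_gram_mulVec_self])
  rw [star_dotProduct_gram_mulVec_self, star_dotProduct_gram_mulVec_self] at hlim
  simp only [Pi.sub_apply, Pi.smul_apply, smul_sub, Finset.sum_sub_distrib, smul_comm (g _) lam,
    ← Finset.smul_sum, ← RCLike.ofReal_div] at hlim
  exact hlim
end

section
/- Let A, C ∈ ℂ^{M×N}, and suppose A*C = UΣV*, where U, V ∈ ℂ^{N×N} are unitary and Σ ∈ ℝ^{N×N} is diagonal with nonnegative real entries (a singular value decomposition of A*C). Then B₀ = UV* solves the orthogonal Procrustes problem min over unitary B ∈ ℂ^{N×N} of ‖AB − C‖_F: for every unitary B ∈ ℂ^{N×N}, ‖AB₀ − C‖_F ≤ ‖AB − C‖_F. (This is the key optimization step of the mpEDMD algorithm, applied with A = D^{1/2}Ψ_XG^{-1/2} and C = D^{1/2}Ψ_YG^{-1/2}.) -/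
/-!
For unitary `B`, `‖AB - C‖² = ‖A‖² + ‖C‖² - 2 Re tr(B*A*C)`, so it suffices to maximise
`Re tr(B*A*C) = Re tr(WΣ)` with `W = V*B*U`, again unitary. Entries of a unitary matrix have
modulus at most `1` and `σᵢ ≥ 0`, so `Re tr(WΣ) ≤ ∑ σᵢ`, with equality at `W = 1`, i.e. `B = UV*`.
-/

open scoped Matrix

attribute [local instance] Matrix.frobeniusNormedAddCommGroup

namespace Matrix

variable {𝕜 m n : Type*} [RCLike 𝕜] [Fintype m] [Fintype n]

theorem frobenius_norm_sq_eq_re_trace (X : Matrix m n 𝕜) :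
    ‖X‖ ^ 2 = RCLike.re (Xᴴ * X).trace := by
  have hnorm : ‖X‖ ^ 2 = ∑ i, ∑ j, ‖X i j‖ ^ 2 := by
    rw [frobenius_norm_def, ← Real.rpow_natCast, ← Real.rpow_mul (by positivity)]
    norm_num
  have htrace : (Xᴴ * X).trace = ∑ j, ∑ i, ((‖X i j‖ ^ 2 : ℝ) : 𝕜) := by
    simp only [trace, diag_apply, mul_apply, conjTranspose_apply, RCLike.star_def,
      RCLike.conj_mul, RCLike.ofReal_pow]
  rw [hnorm, htrace, Finset.sum_comm]
  simp only [map_sum, RCLike.ofReal_re]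

theorem trace_conjTranspose_mul_svd (X U S V : Matrix n n 𝕜) :
    (Xᴴ * (U * S * Vᴴ)).trace = (Vᴴ * Xᴴ * U * S).trace := by
  rw [← Matrix.mul_assoc, ← Matrix.mul_assoc, trace_mul_comm]
  simp only [Matrix.mul_assoc]

variable [DecidableEq n]

theorem frobenius_norm_mul_unitary_sub_sq (A C : Matrix m n 𝕜) {B : Matrix n n 𝕜}
    (hB : B ∈ unitaryGroup n 𝕜) :
    ‖A * B - C‖ ^ 2 = ‖A‖ ^ 2 + ‖C‖ ^ 2 - 2 * RCLike.re (Bᴴ * (Aᴴ * C)).trace := by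
  have hBB : B * Bᴴ = 1 := mem_unitaryGroup_iff.1 hB
  have expand : (A * B - C)ᴴ * (A * B - C)
      = Bᴴ * (Aᴴ * A) * B - Bᴴ * (Aᴴ * C) - (Bᴴ * (Aᴴ * C))ᴴ + Cᴴ * C := by
    simp only [conjTranspose_sub, conjTranspose_mul, conjTranspose_conjTranspose,
      Matrix.sub_mul, Matrix.mul_sub, Matrix.mul_assoc]
    abel
  have hcyc : (Bᴴ * (Aᴴ * A) * B).trace = (Aᴴ * A).trace := by
    rw [trace_mul_comm, ← Matrix.mul_assoc, hBB, Matrix.one_mul]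
  simp only [frobenius_norm_sq_eq_re_trace, expand, trace_add, trace_sub, hcyc,
    trace_conjTranspose, map_add, map_sub, RCLike.star_def, RCLike.conj_re]
  ring

theorem re_trace_mul_diagonal_le {W : Matrix n n 𝕜} (hW : W ∈ unitaryGroup n 𝕜)
    {σ : n → ℝ} (hσ : ∀ i, 0 ≤ σ i) :
    RCLike.re (W * diagonal fun i => (σ i : 𝕜)).trace ≤ ∑ i, σ i := by
  simp only [trace, diag_apply, mul_diagonal, map_sum, RCLike.re_mul_ofReal]
  refine Finset.sum_le_sum fun i _ => mul_le_of_le_one_left (hσ i) ?_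
  exact (RCLike.re_le_norm _).trans (entry_norm_bound_of_unitary hW i i)

theorem re_trace_conjTranspose_mul_svd_le {U V B : Matrix n n 𝕜}
    (hU : U ∈ unitaryGroup n 𝕜) (hV : V ∈ unitaryGroup n 𝕜) (hB : B ∈ unitaryGroup n 𝕜)
    {σ : n → ℝ} (hσ : ∀ i, 0 ≤ σ i) :
    RCLike.re (Bᴴ * (U * diagonal (fun i => (σ i : 𝕜)) * Vᴴ)).trace ≤
      RCLike.re ((U * Vᴴ)ᴴ * (U * diagonal (fun i => (σ i : 𝕜)) * Vᴴ)).trace := by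
  have hW : Vᴴ * Bᴴ * U ∈ unitaryGroup n 𝕜 :=
    mul_mem (mul_mem (Unitary.star_mem hV) (Unitary.star_mem hB)) hU
  have hW₀ : Vᴴ * (U * Vᴴ)ᴴ * U = 1 := by
    have hU' : Uᴴ * U = 1 := mem_unitaryGroup_iff'.1 hU
    have hV' : Vᴴ * V = 1 := mem_unitaryGroup_iff'.1 hV
    rw [conjTranspose_mul, conjTranspose_conjTranspose, Matrix.mul_assoc, Matrix.mul_assoc, hU',
      Matrix.mul_one, hV']
  rw [trace_conjTranspose_mul_svd, trace_conjTranspose_mul_svd, hW₀, Matrix.one_mul,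
    trace_diagonal, map_sum]
  simpa only [RCLike.ofReal_re] using re_trace_mul_diagonal_le hW hσ

end Matrix

/-- The orthogonal Procrustes problem (key optimization step of mpEDMD):
if `A*C = UΣV*` with `U, V` unitary and `Σ` diagonal with nonnegative real entries,
then `B₀ = UV*` minimizes `‖AB − C‖_F` over all unitary `B`. -/
theorem orthogonal_procrustes
    {M N : ℕ} (A C : Matrix (Fin M) (Fin N) ℂ)
    (U V S : Matrix (Fin N) (Fin N) ℂ)
    (hU : Uᴴ * U = 1) (hV : Vᴴ * V = 1)
    (σ : Fin N → ℝ) (hσ : ∀ i, 0 ≤ σ i)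
    (hS : S = Matrix.diagonal fun i => ((σ i : ℝ) : ℂ))
    (hSVD : Aᴴ * C = U * S * Vᴴ) :
    ∀ B : Matrix (Fin N) (Fin N) ℂ, Bᴴ * B = 1 →
      ‖A * (U * Vᴴ) - C‖ ≤ ‖A * B - C‖ := by
  intro B hB
  have hU' : U ∈ Matrix.unitaryGroup (Fin N) ℂ := Matrix.mem_unitaryGroup_iff'.2 hU
  have hV' : V ∈ Matrix.unitaryGroup (Fin N) ℂ := Matrix.mem_unitaryGroup_iff'.2 hV
  have hB' : B ∈ Matrix.unitaryGroup (Fin N) ℂ := Matrix.mem_unitaryGroup_iff'.2 hB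
  have hB₀ : U * Vᴴ ∈ Matrix.unitaryGroup (Fin N) ℂ := mul_mem hU' (Unitary.star_mem hV')
  have hcross :
      RCLike.re (Bᴴ * (Aᴴ * C)).trace ≤ RCLike.re ((U * Vᴴ)ᴴ * (Aᴴ * C)).trace := by
    rw [hSVD, hS]
    exact Matrix.re_trace_conjTranspose_mul_svd_le hU' hV' hB' hσ
  have hsq : ‖A * (U * Vᴴ) - C‖ ^ 2 ≤ ‖A * B - C‖ ^ 2 := by
    rw [Matrix.frobenius_norm_mul_unitary_sub_sq A C hB₀,
      Matrix.frobenius_norm_mul_unitary_sub_sq A C hB']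
    linarith
  exact (pow_le_pow_iff_left₀ (norm_nonneg _) (norm_nonneg _) two_ne_zero).1 hsq
end
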